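/- The constants c_p := (1/[N−p]_q!) · Π_{l=p}^{N−1} (q^{l−N/2} + q^{N/2−l})/(q^{1−N/2} + q^{N/2−1}) satisfy the recursion relation [N−p]_q · c_p · c_{N−p+1} = [p]_q · c_{p+1} · c_{N−p} for all 1 ≤ p ≤ N−1. -/
import Mathlib


/-- The symmetric q-number `[m]_q = (q^m − q^{−m})/(q − q⁻¹)`. -/
noncomputable def qnum (q : ℝ) (m : ℕ) : ℝ := (q ^ (m : ℤ) - q ^ (-(m : ℤ))) / (q - q⁻¹)

/-- The q-factorial `[m]_q! = [1]_q [2]_q ⋯ [m]_q`. -/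
noncomputable def qfact (q : ℝ) (m : ℕ) : ℝ := ∏ k ∈ Finset.range m, qnum q (k + 1)

/-- The Hodge-map normalization constants
`c_p = (1/[N−p]_q!) Π_{l=p}^{N−1} (q^{l−N/2}+q^{N/2−l})/(q^{1−N/2}+q^{N/2−1})`. -/
noncomputable def cHodge (N : ℕ) (q : ℝ) (p : ℕ) : ℝ :=
  (qfact q (N - p))⁻¹ *
    ∏ l ∈ Finset.Ico p N,
      (q ^ ((l : ℝ) - (N : ℝ) / 2) + q ^ ((N : ℝ) / 2 - (l : ℝ))) /
        (q ^ (1 - (N : ℝ) / 2) + q ^ ((N : ℝ) / 2 - 1))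

lemma qnum_ne_zero (q : ℝ) (hq : 0 < q) (hq1 : q ≠ 1) (m : ℕ) (hm : 1 ≤ m) :
    qnum q m ≠ 0 := by
  have hinj := zpow_right_injective₀ hq hq1
  apply div_ne_zero
  · rw [sub_ne_zero]
    intro h
    have := hinj h
    omega
  · rw [sub_ne_zero]
    intro h
    have : q ^ (1 : ℤ) = q ^ (-1 : ℤ) := by simpa using h
    have := hinj this
    omega

lemma qfact_succ (q : ℝ) (m : ℕ) : qfact q (m + 1) = qfact q m * qnum q (m + 1) := by
  rw [qfact, Finset.prod_range_succ]; rfl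

lemma cancel_aux (x y a b F A B : ℝ) (hx : x ≠ 0) (hy : y ≠ 0) :
    x * ((a * x)⁻¹ * (F * A)) * (b⁻¹ * B) = y * (a⁻¹ * A) * ((b * y)⁻¹ * (F * B)) := by
  rw [mul_inv, mul_inv]
  have hx' := mul_inv_cancel₀ hx
  have hy' := mul_inv_cancel₀ hy
  linear_combination (a⁻¹ * b⁻¹ * F * A * B) * hx' - (a⁻¹ * b⁻¹ * F * A * B) * hy'

/-- The recursion `[N−p]_q c_p c_{N−p+1} = [p]_q c_{p+1} c_{N−p}` for `1 ≤ p ≤ N−1`. -/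
theorem cHodge_recursion (N : ℕ) (q : ℝ) (hq : 0 < q) (hq1 : q ≠ 1)
    (p : ℕ) (hp1 : 1 ≤ p) (hp2 : p + 1 ≤ N) :
    qnum q (N - p) * cHodge N q p * cHodge N q (N - p + 1) =
      qnum q p * cHodge N q (p + 1) * cHodge N q (N - p) := by
  obtain ⟨j, rfl⟩ : ∃ j, p = j + 1 := ⟨p - 1, by omega⟩
  obtain ⟨k, rfl⟩ : ∃ k, N = j + k + 2 := ⟨N - j - 2, by omega⟩
  have h1 : j + k + 2 - (j + 1) = k + 1 := by omega
  have h3 : j + k + 2 - (k + 1 + 1) = j := by omega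
  have h4 : j + k + 2 - (j + 1 + 1) = k := by omega
  have h5 : j + k + 2 - (k + 1) = j + 1 := by omega
  rw [h1, cHodge, cHodge, cHodge, cHodge, h1, h3, h4, h5]
  have hsplit : ∀ a b : ℕ, a < b →
      (∏ l ∈ Finset.Ico a b,
        (q ^ ((l : ℝ) - ((j + k + 2 : ℕ) : ℝ) / 2) + q ^ (((j + k + 2 : ℕ) : ℝ) / 2 - (l : ℝ))) /
          (q ^ (1 - ((j + k + 2 : ℕ) : ℝ) / 2) + q ^ (((j + k + 2 : ℕ) : ℝ) / 2 - 1))) =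
      ((q ^ ((a : ℝ) - ((j + k + 2 : ℕ) : ℝ) / 2) + q ^ (((j + k + 2 : ℕ) : ℝ) / 2 - (a : ℝ))) /
          (q ^ (1 - ((j + k + 2 : ℕ) : ℝ) / 2) + q ^ (((j + k + 2 : ℕ) : ℝ) / 2 - 1))) *
      ∏ l ∈ Finset.Ico (a + 1) b,
        (q ^ ((l : ℝ) - ((j + k + 2 : ℕ) : ℝ) / 2) + q ^ (((j + k + 2 : ℕ) : ℝ) / 2 - (l : ℝ))) /
          (q ^ (1 - ((j + k + 2 : ℕ) : ℝ) / 2) + q ^ (((j + k + 2 : ℕ) : ℝ) / 2 - 1)) := by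
    intro a b hab
    exact Finset.prod_eq_prod_Ico_succ_bot hab _
  rw [hsplit (j + 1) (j + k + 2) (by omega), hsplit (k + 1) (j + k + 2) (by omega)]
  have hfeq : q ^ (((j + 1 : ℕ) : ℝ) - ((j + k + 2 : ℕ) : ℝ) / 2) +
        q ^ (((j + k + 2 : ℕ) : ℝ) / 2 - ((j + 1 : ℕ) : ℝ)) =
      q ^ (((k + 1 : ℕ) : ℝ) - ((j + k + 2 : ℕ) : ℝ) / 2) +
        q ^ (((j + k + 2 : ℕ) : ℝ) / 2 - ((k + 1 : ℕ) : ℝ)) := by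
    have e1 : ((j + 1 : ℕ) : ℝ) - ((j + k + 2 : ℕ) : ℝ) / 2 =
        ((j + k + 2 : ℕ) : ℝ) / 2 - ((k + 1 : ℕ) : ℝ) := by push_cast; ring
    have e2 : ((j + k + 2 : ℕ) : ℝ) / 2 - ((j + 1 : ℕ) : ℝ) =
        ((k + 1 : ℕ) : ℝ) - ((j + k + 2 : ℕ) : ℝ) / 2 := by push_cast; ring
    rw [e1, e2]; ring
  rw [hfeq, qfact_succ q k, qfact_succ q j]
  have hk : qnum q (k + 1) ≠ 0 := qnum_ne_zero q hq hq1 _ (by omega)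
  have hj : qnum q (j + 1) ≠ 0 := qnum_ne_zero q hq hq1 _ (by omega)
  exact cancel_aux _ _ _ _ _ _ _ hk hj
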